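/- (Odd-Degree Regularity Lemma) Let d > 1 be odd and let H = (H_i)_{3 ≤ i ≤ d} be a collection of functions H_i : ℤ_{≥0}² → ℤ_{≥0}, each non-decreasing in each variable. For any non-negative integers r₁,…,r_d there exist constants C₁,…,C_d, depending only on the functions H_i and on r₁,…,r_d, such that the following holds. Given a system F of forms in ℤ[x₁,…,x_s] consisting strictly of odd-degree forms of degree at most d, with exactly r_ℓ forms of degree ℓ, there exists an auxiliary system G of forms in ℚ[x₁,…,x_s], also consisting strictly of odd-degree forms of degree at most d with r'_ℓ forms of degree ℓ (write G^{(ℓ)} for the degree-ℓ subsystem and R' = r'₁ + … + r'_d), satisfying: (1) the common rational zero locus of G is contained in the common zero locus of F; (2) for each 1 ≤ ℓ ≤ d, r'_ℓ ≤ C_ℓ; (3) for each odd 3 ≤ ℓ ≤ d, the Schmidt rank satisfies h(G^{(ℓ)}) ≥ H_ℓ(R', d), and the linear forms of G^{(1)} are linearly independent over ℚ. -/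

import Mathlib

open MvPolynomial

/-- `f` admits a decomposition `f = ∑_{i<n} u_i v_i` into `n` products of forms of
strictly positive degree. -/
def SchmidtDecomp {s : ℕ} (f : MvPolynomial (Fin s) ℚ) (n : ℕ) : Prop :=
  ∃ (u v : Fin n → MvPolynomial (Fin s) ℚ) (a b : Fin n → ℕ),
    (∀ i, 0 < a i ∧ (u i).IsHomogeneous (a i)) ∧
    (∀ i, 0 < b i ∧ (v i).IsHomogeneous (b i)) ∧
    f = ∑ i, u i * v i

/-- The Schmidt rank (strength) of a form of degree `≥ 2`. -/
noncomputable def schmidtRank {s : ℕ} (f : MvPolynomial (Fin s) ℚ) : ℕ :=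
  sInf {n | SchmidtDecomp f n}

/-- The Schmidt rank (`h`-invariant) of a system of forms of the same degree `≥ 2`: the
minimum of the Schmidt ranks of all non-trivial rational linear combinations. -/
noncomputable def schmidtRankSys {s r : ℕ} (G : Fin r → MvPolynomial (Fin s) ℚ) : ℕ :=
  sInf {n | ∃ c : Fin r → ℚ, c ≠ 0 ∧ n = schmidtRank (∑ i, MvPolynomial.C (c i) * G i)}

lemma fdeg_add {s : ℕ} (a b : Fin s →₀ ℕ) : (a + b).degree = a.degree + b.degree := by
  simp only [Finsupp.degree_eq_weight_one, map_add]

lemma decomp_exists {s ℓ : ℕ} (hl : 2 ≤ ℓ) (f : MvPolynomial (Fin s) ℚ)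
    (hf : f.IsHomogeneous ℓ) : ∃ n, SchmidtDecomp f n := by
  classical
  set n := f.support.card with hn
  refine ⟨n, ?_⟩
  have e : Fin n ≃ f.support := (Fintype.equivFinOfCardEq (by simp [hn])).symm
  have hmem : ∀ k : Fin n, ((e k : Fin s →₀ ℕ)).degree = ℓ := by
    intro k
    have := hf (mem_support_iff.mp (e k).2)
    rw [Finsupp.degree_eq_weight_one]; exact this
  have hne : ∀ k : Fin n, ∃ j, (e k : Fin s →₀ ℕ) j ≠ 0 := by
    intro k
    by_contra h
    push_neg at h
    have : ((e k : Fin s →₀ ℕ)).degree = 0 := by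
      simp [Finsupp.degree_apply, h]
    have := hmem k
    omega
  choose j hj using hne
  have hle : ∀ k, Finsupp.single (j k) 1 ≤ (e k : Fin s →₀ ℕ) := by
    intro k
    rw [Finsupp.single_le_iff]
    exact Nat.one_le_iff_ne_zero.2 (hj k)
  have hsplit : ∀ k, Finsupp.single (j k) 1 + ((e k : Fin s →₀ ℕ) - Finsupp.single (j k) 1)
      = (e k : Fin s →₀ ℕ) := fun k => add_tsub_cancel_of_le (hle k)
  refine ⟨fun k => X (j k), fun k => monomial ((e k : Fin s →₀ ℕ) - Finsupp.single (j k) 1)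
      (f.coeff (e k)), fun _ => 1, fun _ => ℓ - 1, fun k => ⟨one_pos, isHomogeneous_X _ _⟩,
      fun k => ⟨by show 0 < ℓ - 1; omega, isHomogeneous_monomial _ ?_⟩, ?_⟩
  · have h1 : Finsupp.degree (Finsupp.single (j k) 1 : Fin s →₀ ℕ) = 1 := by
      simp [Finsupp.degree_apply, Finsupp.support_single_ne_zero _ one_ne_zero]
    have := fdeg_add (Finsupp.single (j k) 1) ((e k : Fin s →₀ ℕ) - Finsupp.single (j k) 1)
    rw [hsplit k, hmem k, h1] at this
    show _ = ℓ - 1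
    omega
  · have : ∀ k : Fin n, X (j k) * monomial ((e k : Fin s →₀ ℕ) - Finsupp.single (j k) 1)
        (f.coeff (e k)) = monomial (e k : Fin s →₀ ℕ) (f.coeff (e k)) := by
      intro k
      rw [← hsplit k]
      rw [monomial_single_add, pow_one]
      congr 1
      exact (add_tsub_cancel_of_le (hle k)).symm ▸ rfl
    calc f = ∑ m ∈ f.support, monomial m (f.coeff m) := (support_sum_monomial_coeff f).symm
    _ = ∑ m : f.support, monomial (m : Fin s →₀ ℕ) (f.coeff m) :=
        (f.support.sum_coe_sort _).symm
    _ = ∑ k : Fin n, monomial (e k : Fin s →₀ ℕ) (f.coeff (e k)) :=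
        (Fintype.sum_equiv e _ _ (fun k => rfl)).symm
    _ = _ := by
        refine Finset.sum_congr rfl fun k _ => ?_
        rw [this k]

lemma graded_decomp {s ℓ n : ℕ} (hl : 2 ≤ ℓ) (f : MvPolynomial (Fin s) ℚ)
    (hf : f.IsHomogeneous ℓ) (h : SchmidtDecomp f n) :
    ∃ (u v : Fin n → MvPolynomial (Fin s) ℚ) (a b : Fin n → ℕ),
      (∀ i, 0 < a i ∧ (u i).IsHomogeneous (a i)) ∧
      (∀ i, 0 < b i ∧ (v i).IsHomogeneous (b i)) ∧
      (∀ i, a i + b i = ℓ) ∧ f = ∑ i, u i * v i := by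
  classical
  obtain ⟨u, v, a, b, hu, hv, hsum⟩ := h
  refine ⟨fun i => if a i + b i = ℓ then u i else 0,
      fun i => if a i + b i = ℓ then v i else 0,
      fun i => if a i + b i = ℓ then a i else 1,
      fun i => if a i + b i = ℓ then b i else ℓ - 1, ?_, ?_, ?_, ?_⟩
  · intro i
    beta_reduce
    by_cases hi : a i + b i = ℓ
    · rw [if_pos hi, if_pos hi]; exact hu i
    · rw [if_neg hi, if_neg hi]; exact ⟨one_pos, isHomogeneous_zero _ _ _⟩
  · intro i
    beta_reduce
    by_cases hi : a i + b i = ℓ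
    · rw [if_pos hi, if_pos hi]; exact hv i
    · rw [if_neg hi, if_neg hi]; exact ⟨by omega, isHomogeneous_zero _ _ _⟩
  · intro i
    beta_reduce
    by_cases hi : a i + b i = ℓ
    · rw [if_pos hi, if_pos hi, hi]
    · rw [if_neg hi, if_neg hi]; omega
  · have hcomp : homogeneousComponent ℓ f = f := by
      rw [homogeneousComponent_of_mem ((mem_homogeneousSubmodule _ _).mpr hf), if_pos rfl]
    calc f = homogeneousComponent ℓ f := hcomp.symm
    _ = ∑ i, homogeneousComponent ℓ (u i * v i) := by rw [hsum, map_sum]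
    _ = _ := by
        refine Finset.sum_congr rfl fun i _ => ?_
        have hm : u i * v i ∈ homogeneousSubmodule (Fin s) ℚ (a i + b i) :=
          (mem_homogeneousSubmodule _ _).mpr ((hu i).2.mul (hv i).2)
        rw [homogeneousComponent_of_mem hm]
        beta_reduce
        by_cases hi : a i + b i = ℓ
        · rw [if_pos hi.symm, if_pos hi, if_pos hi]
        · rw [if_neg (Ne.symm hi), if_neg hi, if_neg hi, zero_mul]

lemma odd_factors {s ℓ τ : ℕ} (h3 : 3 ≤ ℓ) (hodd : Odd ℓ) (f : MvPolynomial (Fin s) ℚ)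
    (hf : f.IsHomogeneous ℓ) (hrank : schmidtRank f < τ) :
    ∃ n, n < τ ∧ ∃ (w : Fin n → MvPolynomial (Fin s) ℚ) (e : Fin n → ℕ),
      (∀ i, Odd (e i) ∧ 1 ≤ e i ∧ e i + 2 ≤ ℓ ∧ (w i).IsHomogeneous (e i)) ∧
      (∀ x : Fin s → ℚ, (∀ i, eval x (w i) = 0) → eval x f = 0) := by
  classical
  have hne : {n | SchmidtDecomp f n}.Nonempty := decomp_exists (by omega) f hf
  have hmem : schmidtRank f ∈ {n | SchmidtDecomp f n} := Nat.sInf_mem hne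
  obtain ⟨u, v, a, b, hu, hv, hab, hsum⟩ := graded_decomp (by omega) f hf hmem
  refine ⟨schmidtRank f, hrank, fun i => if Odd (a i) then u i else v i,
      fun i => if Odd (a i) then a i else b i, ?_, ?_⟩
  · intro i
    beta_reduce
    have ha := (hu i).1
    have hb := (hv i).1
    have habi := hab i
    have hlodd := Nat.odd_iff.1 hodd
    by_cases hi : Odd (a i)
    · have hai := Nat.odd_iff.1 hi
      simp only [if_pos hi]
      exact ⟨hi, by omega, by omega, (hu i).2⟩
    · have hai : a i % 2 = 0 := by
        rcases Nat.even_or_odd (a i) with h | h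
        · exact Nat.even_iff.1 h
        · exact absurd h hi
      simp only [if_neg hi]
      exact ⟨Nat.odd_iff.2 (by omega), by omega, by omega, (hv i).2⟩
  · intro x hx
    rw [hsum, map_sum]
    refine Finset.sum_eq_zero fun i _ => ?_
    rw [map_mul]
    have h := hx i
    beta_reduce at h
    by_cases hi : Odd (a i)
    · rw [if_pos hi] at h
      rw [h, zero_mul]
    · rw [if_neg hi] at h
      rw [h, mul_zero]
lemma surgery {d s : ℕ} (ρ : ℕ → ℕ) (G : ∀ m, Fin (ρ m) → MvPolynomial (Fin s) ℚ)
    (hG : ∀ m i, (G m i).IsHomogeneous m)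
    (hρ : ∀ m, ¬ Odd m ∨ d < m → ρ m = 0)
    (ℓ : ℕ) (hlodd : Odd ℓ) (hld : ℓ ≤ d) (i₀ : Fin (ρ ℓ))
    (n : ℕ) (w : Fin n → MvPolynomial (Fin s) ℚ) (e : Fin n → ℕ)
    (he : ∀ i, Odd (e i) ∧ 1 ≤ e i ∧ e i + 2 ≤ ℓ ∧ (w i).IsHomogeneous (e i))
    (hloc : ∀ x : Fin s → ℚ, (∀ i, eval x (w i) = 0) →
      (∀ j : Fin (ρ ℓ), j ≠ i₀ → eval x (G ℓ j) = 0) → eval x (G ℓ i₀) = 0) :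
    ∃ (ρ'' : ℕ → ℕ) (G'' : ∀ m, Fin (ρ'' m) → MvPolynomial (Fin s) ℚ),
      (∀ m i, (G'' m i).IsHomogeneous m) ∧
      (∀ m, ¬ Odd m ∨ d < m → ρ'' m = 0) ∧
      (∀ x : Fin s → ℚ, (∀ m i, eval x (G'' m i) = 0) → ∀ m i, eval x (G m i) = 0) ∧
      ρ'' ℓ = ρ ℓ - 1 ∧ (∀ m, ℓ < m → ρ'' m = ρ m) ∧ (∀ m, ρ'' m ≤ ρ m + n) := by
  classical
  have hρℓ : 0 < ρ ℓ := i₀.pos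
  set m₀ := ρ ℓ - 1 with hm₀
  have hcast : ρ ℓ = m₀ + 1 := by omega
  set j₀ : Fin (m₀ + 1) := Fin.cast hcast i₀ with hj₀
  set emb : Fin m₀ → Fin (ρ ℓ) := fun k => Fin.cast hcast.symm (j₀.succAbove k) with hemb
  have hemb_ne : ∀ k, emb k ≠ i₀ := by
    intro k h
    apply j₀.succAbove_ne k
    have := congrArg (Fin.cast hcast) h
    simpa [hemb, hj₀] using this
  have hemb_surj : ∀ j : Fin (ρ ℓ), j ≠ i₀ → ∃ k, emb k = j := by
    intro j hj
    have : Fin.cast hcast j ≠ j₀ := by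
      simp only [hj₀, ne_eq, Fin.ext_iff, Fin.coe_cast]
      exact fun h => hj (Fin.ext h)
    obtain ⟨k, hk⟩ := Fin.exists_succAbove_eq this
    exact ⟨k, by simp [hemb, hk]⟩
  set cnt : ℕ → ℕ := fun m => Fintype.card {i : Fin n // e i = m} with hcnt
  have hcnt_le : ∀ m, cnt m ≤ n := fun m => by
    simpa using Fintype.card_subtype_le (fun i : Fin n => e i = m)
  have hcnt_zero : ∀ m, (¬ Odd m ∨ ℓ ≤ m) → cnt m = 0 := by
    intro m hm
    rw [hcnt]
    rw [Fintype.card_eq_zero_iff]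
    constructor
    rintro ⟨i, hi⟩
    obtain ⟨h1, h2, h3, _⟩ := he i
    rcases hm with hm | hm
    · exact hm (hi ▸ h1)
    · omega
  set eqv : ∀ m, Fin (cnt m) ≃ {i : Fin n // e i = m} := fun m => (Fintype.equivFin _).symm
    with heqv
  set ρ'' : ℕ → ℕ := fun m => if m = ℓ then m₀ else ρ m + cnt m with hρ''
  have pf1 : ∀ {m}, m = ℓ → ρ'' m = m₀ := fun h => by simp [hρ'', h]
  have pf2 : ∀ {m}, m ≠ ℓ → ρ'' m = ρ m + cnt m := fun h => by simp [hρ'', h]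
  set G'' : ∀ m, Fin (ρ'' m) → MvPolynomial (Fin s) ℚ := fun m k =>
    if h : m = ℓ then G ℓ (emb (Fin.cast (pf1 h) k))
    else Fin.addCases (motive := fun _ => MvPolynomial (Fin s) ℚ)
      (G m) (fun j => w (eqv m j)) (Fin.cast (pf2 h) k) with hG''
  refine ⟨ρ'', G'', ?_, ?_, ?_, pf1 rfl, ?_, ?_⟩
  · intro m k
    rw [hG'']
    beta_reduce
    by_cases h : m = ℓ
    · rw [dif_pos h]; subst h; exact hG m _
    · rw [dif_neg h]
      refine Fin.addCases (motive := fun t => (Fin.addCases (motive := fun _ => MvPolynomial (Fin s) ℚ) (G m) (fun j => w (eqv m j)) t).IsHomogeneous m) ?_ ?_ (Fin.cast (pf2 h) k)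
      · intro i; rw [Fin.addCases_left]; exact hG m i
      · intro j
        rw [Fin.addCases_right]
        have h2 := (he (eqv m j).1).2.2.2
        rwa [(eqv m j).2] at h2
  · intro m hm
    have hmℓ : m ≠ ℓ := by
      rintro rfl
      rcases hm with hm | hm
      · exact hm hlodd
      · omega
    rw [pf2 hmℓ, hρ m hm, hcnt_zero m (hm.imp id fun h => by omega), Nat.add_zero]
  · -- locus
    intro x hx
    have hw : ∀ i, eval x (w i) = 0 := by
      intro i
      have hmℓ : e i ≠ ℓ := by have := (he i).2.2.1; omega
      have hk := hx (e i) (Fin.cast (pf2 hmℓ).symm (Fin.natAdd (ρ (e i)) ((eqv (e i)).symm ⟨i, rfl⟩)))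
      rw [hG''] at hk
      beta_reduce at hk
      rw [dif_neg hmℓ] at hk
      rw [Fin.cast_cast] at hk
      rw [Fin.cast_eq_self] at hk
      rw [Fin.addCases_right] at hk
      simpa using hk
    have hne : ∀ j : Fin (ρ ℓ), j ≠ i₀ → eval x (G ℓ j) = 0 := by
      intro j hj
      obtain ⟨k, hk⟩ := hemb_surj j hj
      have h := hx ℓ (Fin.cast (pf1 rfl).symm k)
      rw [hG''] at h
      beta_reduce at h
      rw [dif_pos rfl, Fin.cast_cast, Fin.cast_eq_self, hk] at h
      exact h
    intro m i
    by_cases hm : m = ℓ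
    · subst hm
      by_cases hi : i = i₀
      · subst hi; exact hloc x hw hne
      · exact hne i hi
    · have h := hx m (Fin.cast (pf2 hm).symm (Fin.castAdd (cnt m) i))
      rw [hG''] at h
      beta_reduce at h
      rw [dif_neg hm, Fin.cast_cast, Fin.cast_eq_self, Fin.addCases_left] at h
      exact h
  · intro m hm
    have hmℓ : m ≠ ℓ := by omega
    rw [pf2 hmℓ, hcnt_zero m (Or.inr (by omega)), Nat.add_zero]
  · intro m
    by_cases h : m = ℓ
    · rw [pf1 h]; subst h; omega
    · rw [pf2 h]; exact Nat.add_le_add_left (hcnt_le m) _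
lemma homog_map {s n : ℕ} (f : MvPolynomial (Fin s) ℤ) (hf : f.IsHomogeneous n) :
    (MvPolynomial.map (Int.castRingHom ℚ) f).IsHomogeneous n := by
  intro d hd
  rw [coeff_map] at hd
  exact hf fun h => hd (by simp [h])
def ProfRel (d : ℕ) : (ℕ → ℕ) → (ℕ → ℕ) → Prop :=
  InvImage (Pi.Lex (· < ·) (fun {_ : Fin (d + 1)} => ((· < ·) : ℕ → ℕ → Prop)))
    (fun ρ k => ρ (d - (k : ℕ)))

lemma profRel_wf (d : ℕ) : WellFounded (ProfRel d) :=
  InvImage.wf _ (Pi.Lex.wellFounded (· < ·) fun _ => wellFounded_lt)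

lemma profRel_step (d : ℕ) (ρ₁ ρ₂ : ℕ → ℕ) (ℓ : ℕ) (hld : ℓ ≤ d) (hlt : ρ₁ ℓ < ρ₂ ℓ)
    (hgt : ∀ m, ℓ < m → ρ₁ m = ρ₂ m) : ProfRel d ρ₁ ρ₂ := by
  refine ⟨⟨d - ℓ, by omega⟩, ?_, ?_⟩
  · intro j hj
    have hj' : (j : ℕ) < d - ℓ := hj
    show ρ₁ (d - (j : ℕ)) = ρ₂ (d - (j : ℕ))
    exact hgt _ (by omega)
  · show ρ₁ (d - (d - ℓ)) < ρ₂ (d - (d - ℓ))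
    rw [Nat.sub_sub_self hld]
    exact hlt

lemma main_induction (d : ℕ) (hd : 1 < d) (H : ℕ → ℕ → ℕ → ℕ) (ρ : ℕ → ℕ) :
    ∃ C : ℕ → ℕ,
      ∀ (s : ℕ) (G : ∀ m : ℕ, Fin (ρ m) → MvPolynomial (Fin s) ℚ),
        (∀ m i, (G m i).IsHomogeneous m) → (∀ m, ¬ Odd m ∨ d < m → ρ m = 0) →
        ∃ (r' : ℕ → ℕ) (G' : ∀ m : ℕ, Fin (r' m) → MvPolynomial (Fin s) ℚ),
          (∀ m i, (G' m i).IsHomogeneous m) ∧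
          (∀ m, ¬ Odd m ∨ d < m → r' m = 0) ∧
          (∀ x : Fin s → ℚ, (∀ m i, eval x (G' m i) = 0) → ∀ m i, eval x (G m i) = 0) ∧
          (∀ m, r' m ≤ C m) ∧
          (∀ m, 3 ≤ m → m ≤ d → Odd m → 0 < r' m →
            H m (∑ t ∈ Finset.Icc 1 d, r' t) d ≤ schmidtRankSys (G' m)) ∧
          LinearIndependent ℚ (G' 1) := by
  classical
  induction ρ using (profRel_wf d).induction with
  | _ ρ IH =>
  choose Cfun hCfun using IH
  set R : ℕ := ∑ t ∈ Finset.Icc 1 d, ρ t with hR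
  set B : ℕ := R + (Finset.Icc 1 d).sup (fun m => H m R d) + 1 with hB
  set S : Finset (ℕ → ℕ) :=
    (Finset.univ : Finset (Fin (d + 1) → Fin B)).image
      (fun v m => if h : m ≤ d then (v ⟨m, by omega⟩ : ℕ) else 0) with hS
  refine ⟨fun m => ρ m + S.sup (fun ρ'' => if h : ProfRel d ρ'' ρ then Cfun ρ'' h m else 0), ?_⟩
  intro s G hG hρsupp
  by_cases hgood : (∀ m, 3 ≤ m → m ≤ d → Odd m → 0 < ρ m →
      H m R d ≤ schmidtRankSys (G m)) ∧ LinearIndependent ℚ (G 1)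
  · exact ⟨ρ, G, hG, hρsupp, fun x h => h, fun m => Nat.le_add_right _ _,
      fun m h3 hmd hodd hpos => hgood.1 m h3 hmd hodd hpos, hgood.2⟩
  -- otherwise a step is possible: we produce ρ'', G'' and then use the IH
  have hstep_out : ∃ (ρ'' : ℕ → ℕ) (G'' : ∀ m : ℕ, Fin (ρ'' m) → MvPolynomial (Fin s) ℚ),
      (∀ m i, (G'' m i).IsHomogeneous m) ∧
      (∀ m, ¬ Odd m ∨ d < m → ρ'' m = 0) ∧
      (∀ x : Fin s → ℚ, (∀ m i, eval x (G'' m i) = 0) → ∀ m i, eval x (G m i) = 0) ∧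
      ProfRel d ρ'' ρ ∧ (∀ m, ρ'' m < B) := by
    by_cases hA : ∀ m, 3 ≤ m → m ≤ d → Odd m → 0 < ρ m → H m R d ≤ schmidtRankSys (G m)
    · -- then the linear forms are dependent
      have hB' : ¬ LinearIndependent ℚ (G 1) := fun h => hgood ⟨hA, h⟩
      obtain ⟨g, hgsum, i₀, hgi₀⟩ := Fintype.not_linearIndependent_iff.mp hB'
      have hloc : ∀ x : Fin s → ℚ, (∀ i : Fin 0, eval x (Fin.elim0 i) = 0) →
          (∀ j : Fin (ρ 1), j ≠ i₀ → eval x (G 1 j) = 0) → eval x (G 1 i₀) = 0 := by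
        intro x _ hj
        have h0 : eval x (∑ i, g i • G 1 i) = 0 := by rw [hgsum]; simp
        rw [map_sum] at h0
        rw [Finset.sum_eq_single i₀ (fun j _ hji => by simp [hj j hji]) (by simp)] at h0
        simp only [smul_eq_C_mul, map_mul, eval_C] at h0
        exact (mul_eq_zero.mp h0).resolve_left hgi₀
      obtain ⟨ρ'', G'', h1, h2, h3, h4, h5, h6⟩ :=
        surgery (d := d) ρ G hG hρsupp 1 odd_one (by omega) i₀ 0 Fin.elim0 Fin.elim0
          (fun i => i.elim0) hloc
      refine ⟨ρ'', G'', h1, h2, h3, profRel_step d ρ'' ρ 1 (by omega) (by have := i₀.pos; omega) h5, ?_⟩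
      intro m
      have := h6 m
      have hρm : ρ m ≤ R + 0 := by
        by_cases hm : m ∈ Finset.Icc 1 d
        · simpa using Finset.single_le_sum (f := ρ) (fun t _ => Nat.zero_le _) hm
        · have : ρ m = 0 := by
            rw [Finset.mem_Icc] at hm
            refine hρsupp m ?_
            by_cases h1d : Odd m
            · right; rcases h1d with ⟨k, hk⟩; omega
            · left; exact h1d
          omega
      omega
    · push_neg at hA
      obtain ⟨ℓ, h3ℓ, hℓd, hℓodd, hℓpos, hrk⟩ := hA
      -- extract a low-rank combination
      have hTne : {n | ∃ c : Fin (ρ ℓ) → ℚ, c ≠ 0 ∧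
          n = schmidtRank (∑ i, MvPolynomial.C (c i) * G ℓ i)}.Nonempty := by
        refine ⟨_, fun _ => 1, ?_, rfl⟩
        intro h
        exact one_ne_zero (congrFun h ⟨0, hℓpos⟩)
      have hmem := Nat.sInf_mem hTne
      obtain ⟨c, hc0, hceq⟩ := hmem
      have hrklt : schmidtRank (∑ i, MvPolynomial.C (c i) * G ℓ i) < H ℓ R d := by
        rw [← hceq]
        exact hrk
      clear hceq hTne
      have hfhom : (∑ i, MvPolynomial.C (c i) * G ℓ i).IsHomogeneous ℓ := by
        refine IsHomogeneous.sum _ _ _ fun i _ => ?_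
        simpa using (isHomogeneous_C (Fin s) (c i)).mul (hG ℓ i)
      obtain ⟨n, hnlt, w, e, he, hwvan⟩ := odd_factors h3ℓ hℓodd _ hfhom hrklt
      obtain ⟨i₀, hci₀⟩ := Function.ne_iff.mp hc0
      have hloc : ∀ x : Fin s → ℚ, (∀ i, eval x (w i) = 0) →
          (∀ j : Fin (ρ ℓ), j ≠ i₀ → eval x (G ℓ j) = 0) → eval x (G ℓ i₀) = 0 := by
        intro x hw hj
        have h0 := hwvan x hw
        rw [map_sum] at h0
        rw [Finset.sum_eq_single i₀ (fun j _ hji => by simp [hj j hji]) (by simp)] at h0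
        simp only [map_mul, eval_C] at h0
        exact (mul_eq_zero.mp h0).resolve_left hci₀
      obtain ⟨ρ'', G'', h1, h2, h3, h4, h5, h6⟩ :=
        surgery (d := d) ρ G hG hρsupp ℓ hℓodd hℓd i₀ n w e he hloc
      refine ⟨ρ'', G'', h1, h2, h3, profRel_step d ρ'' ρ ℓ hℓd (by omega) h5, ?_⟩
      intro m
      have := h6 m
      have hρm : ρ m ≤ R := by
        by_cases hm : m ∈ Finset.Icc 1 d
        · exact Finset.single_le_sum (f := ρ) (fun t _ => Nat.zero_le _) hm
        · have : ρ m = 0 := by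
            rw [Finset.mem_Icc] at hm
            refine hρsupp m ?_
            by_cases h1d : Odd m
            · right; rcases h1d with ⟨k, hk⟩; omega
            · left; exact h1d
          omega
      have hsup : H ℓ R d ≤ (Finset.Icc 1 d).sup (fun m => H m R d) :=
        Finset.le_sup (f := fun m => H m R d) (Finset.mem_Icc.mpr ⟨by omega, hℓd⟩)
      omega
  obtain ⟨ρ'', G'', h1, h2, h3, hrel, hbd⟩ := hstep_out
  -- ρ'' belongs to the candidate finset S
  have hmemS : ρ'' ∈ S := by
    rw [hS, Finset.mem_image]
    refine ⟨fun k => ⟨ρ'' (k : ℕ), hbd _⟩, Finset.mem_univ _, ?_⟩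
    funext m
    by_cases hm : m ≤ d
    · rw [dif_pos hm]
    · rw [dif_neg hm]
      refine (h2 m (Or.inr (by omega))).symm
  obtain ⟨r', G', hh1, hh2, hh3, hh4, hh5, hh6⟩ := hCfun ρ'' hrel s G'' h1 h2
  refine ⟨r', G', hh1, hh2, fun x hx => h3 x (hh3 x hx), ?_, hh5, hh6⟩
  intro m
  have hsup : (if h : ProfRel d ρ'' ρ then Cfun ρ'' h m else 0) ≤
      S.sup (fun ρ₁ => if h : ProfRel d ρ₁ ρ then Cfun ρ₁ h m else 0) :=
    Finset.le_sup (f := fun ρ₁ => if h : ProfRel d ρ₁ ρ then Cfun ρ₁ h m else 0) hmemS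
  rw [dif_pos hrel] at hsup
  exact le_trans (hh4 m) (le_trans hsup (Nat.le_add_left _ _))


/-- **Odd-Degree Regularity Lemma.**  Let `d > 1` be odd and let `H ℓ` (for odd `3 ≤ ℓ ≤ d`)
be growth functions, non-decreasing in each variable.  For any non-negative integers
`r 1, …, r d` (with `r ℓ = 0` for even `ℓ` and for `ℓ > d`, since the systems considered
consist strictly of odd-degree forms of degree at most `d`) there are constants `C ℓ`,
depending only on `H` and `r`, such that any system `F` of integral forms with exactly `r ℓ`
forms of degree `ℓ` admits an auxiliary system `G` of rational forms, again strictly of odd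
degrees at most `d`, with `r' ℓ` forms of degree `ℓ`, satisfying: (1) the common rational
zero locus of `G` is contained in that of `F`; (2) `r' ℓ ≤ C ℓ`; (3) for each odd
`3 ≤ ℓ ≤ d` the Schmidt rank of the degree-`ℓ` block of `G` is at least `H ℓ R' d` where
`R' = ∑ r' ℓ`, and the linear forms of `G` are linearly independent over `ℚ`. -/
theorem statement2 (d : ℕ) (hd : 1 < d) (hdodd : Odd d)
    (H : ℕ → ℕ → ℕ → ℕ)
    (hHmono₁ : ∀ i b, Monotone fun a => H i a b)
    (hHmono₂ : ∀ i a, Monotone (H i a))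
    (r : ℕ → ℕ) (hrodd : ∀ ℓ, ¬ Odd ℓ ∨ d < ℓ → r ℓ = 0) :
    ∃ C : ℕ → ℕ,
      ∀ (s : ℕ) (F : ∀ ℓ : ℕ, Fin (r ℓ) → MvPolynomial (Fin s) ℤ),
        (∀ ℓ i, (F ℓ i).IsHomogeneous ℓ) →
        ∃ (r' : ℕ → ℕ) (G : ∀ ℓ : ℕ, Fin (r' ℓ) → MvPolynomial (Fin s) ℚ),
          (∀ ℓ i, (G ℓ i).IsHomogeneous ℓ) ∧
          (∀ ℓ, ¬ Odd ℓ ∨ d < ℓ → r' ℓ = 0) ∧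
          (∀ x : Fin s → ℚ, (∀ ℓ i, MvPolynomial.eval x (G ℓ i) = 0) →
            ∀ ℓ i, MvPolynomial.eval x (MvPolynomial.map (Int.castRingHom ℚ) (F ℓ i)) = 0) ∧
          (∀ ℓ, r' ℓ ≤ C ℓ) ∧
          (∀ ℓ, 3 ≤ ℓ → ℓ ≤ d → Odd ℓ → 0 < r' ℓ →
            H ℓ (∑ m ∈ Finset.Icc 1 d, r' m) d ≤ schmidtRankSys (G ℓ)) ∧
          LinearIndependent ℚ (G 1) := by
  obtain ⟨C, hC⟩ := main_induction d hd H r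
  refine ⟨C, ?_⟩
  intro s F hF
  obtain ⟨r', G', h1, h2, h3, h4, h5, h6⟩ :=
    hC s (fun ℓ i => MvPolynomial.map (Int.castRingHom ℚ) (F ℓ i))
      (fun ℓ i => homog_map _ (hF ℓ i)) hrodd
  exact ⟨r', G', h1, h2, h3, h4, h5, h6⟩
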